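/- Let f be a characteristic function of a centered random variable with variance σ², let Φ be the standard normal CDF, H(x) = F(xσ) - Φ(x), and assume μ_k = 0 for k = 0,1,2,3,...,m (m ≥ 3) and ν_n(m) := max(ν_n^{(1)}(m), ν_n^{(2)}(m)) < (1/2)e^{-3/2}. Set T₁ = √(-2 ln(2e ν_n(m))). Then for all |t| ≤ T₁, |f(t/σ)| ≤ e^{-t²/6}. -/

import Mathlib

open MeasureTheory ProbabilityTheory Real

section Helpers
open MeasureTheory Finset Complex ProbabilityTheory Real
open scoped ENNReal NNReal

noncomputable def expRem (n : ℕ) (θ : ℝ) : ℂ :=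
  Complex.exp (θ * Complex.I) - ∑ k ∈ Finset.range n, ((θ : ℂ) * Complex.I) ^ k / k.factorial

lemma expRem_zero_eq (θ : ℝ) : expRem 0 θ = Complex.exp (θ * Complex.I) := by
  simp [expRem]

lemma expRem_hasDerivAt (n : ℕ) (θ : ℝ) :
    HasDerivAt (expRem (n + 1)) (Complex.I * expRem n θ) θ := by
  have hexp : HasDerivAt (fun θ : ℝ => Complex.exp (θ * Complex.I))
      (Complex.I * Complex.exp (θ * Complex.I)) θ := by
    have h : HasDerivAt (fun z : ℂ => Complex.exp (z * Complex.I))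
        (Complex.I * Complex.exp ((θ : ℂ) * Complex.I)) (θ : ℂ) := by
      simpa [mul_comm] using (((hasDerivAt_id (θ : ℂ)).mul_const Complex.I).cexp)
    exact h.comp_ofReal
  have hsum : ∀ n : ℕ, HasDerivAt
      (fun θ : ℝ => ∑ k ∈ Finset.range (n + 1), ((θ : ℂ) * Complex.I) ^ k / k.factorial)
      (Complex.I * ∑ k ∈ Finset.range n, ((θ : ℂ) * Complex.I) ^ k / k.factorial) θ := by
    intro n
    induction n with
    | zero => simpa using (hasDerivAt_const θ (1 : ℂ))
    | succ n ih =>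
      have h1 : ((n : ℂ) + 1) ≠ 0 := by exact Nat.cast_add_one_ne_zero n
      have h2 : ((n.factorial : ℂ)) ≠ 0 := Nat.cast_ne_zero.2 n.factorial_ne_zero
      have key : ((n : ℂ) + 1) * (Complex.I ^ (n + 1) / ((n + 1).factorial)) =
          Complex.I * (Complex.I ^ n / n.factorial) := by
        rw [Nat.factorial_succ]
        push_cast
        rw [pow_succ]
        field_simp
      have hterm : HasDerivAt
          (fun θ : ℝ => ((θ : ℂ) * Complex.I) ^ (n + 1) / (n + 1).factorial)
          (Complex.I * (((θ : ℂ) * Complex.I) ^ n / n.factorial)) θ := by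
        have hp : HasDerivAt (fun θ : ℝ => ((θ : ℂ)) ^ (n + 1))
            (((n : ℂ) + 1) * (θ : ℂ) ^ n) θ := by
          have := hasDerivAt_pow (n + 1) (θ : ℂ)
          simpa using this.comp_ofReal
        have := hp.mul_const (Complex.I ^ (n + 1) / (n + 1).factorial)
        convert this using 1
        · rfl
        · funext x; rw [mul_pow]; ring
        · rw [mul_pow]
          linear_combination (-((θ : ℂ)) ^ n) * key
      have := ih.add hterm
      convert this using 1
      · rfl
      · funext x
        rw [Finset.sum_range_succ]
        rfl
      · rw [Finset.sum_range_succ]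
        ring
  have := hexp.sub (hsum n)
  unfold expRem; rw [mul_sub]; exact this

lemma expRem_continuous (n : ℕ) : Continuous (expRem n) := by
  unfold expRem
  fun_prop

lemma expRem_succ_eq_integral (n : ℕ) (θ : ℝ) :
    expRem (n + 1) θ = ∫ s in (0:ℝ)..θ, Complex.I * expRem n s := by
  rw [intervalIntegral.integral_eq_sub_of_hasDerivAt
    (fun x _ => expRem_hasDerivAt n x)
    ((continuous_const.mul (expRem_continuous n)).intervalIntegrable 0 θ)]
  have : expRem (n + 1) 0 = 0 := by
    simp [expRem, Finset.sum_range_succ']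
  rw [this, sub_zero]

lemma norm_expRem_le_nonneg (n : ℕ) (θ : ℝ) (hθ : 0 ≤ θ) :
    ‖expRem n θ‖ ≤ θ ^ n / n.factorial := by
  induction n generalizing θ hθ with
  | zero => simp [expRem_zero_eq, Complex.norm_exp_ofReal_mul_I]
  | succ n ih =>
    rw [expRem_succ_eq_integral]
    have hstep : ‖∫ s in (0:ℝ)..θ, Complex.I * expRem n s‖
        ≤ |∫ s in (0:ℝ)..θ, ‖Complex.I * expRem n s‖| :=
      intervalIntegral.norm_integral_le_abs_integral_norm
    have hmono : (∫ s in (0:ℝ)..θ, ‖Complex.I * expRem n s‖)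
        ≤ ∫ s in (0:ℝ)..θ, s ^ n / n.factorial := by
      apply intervalIntegral.integral_mono_on hθ
      · exact ((continuous_const.mul (expRem_continuous n)).norm.intervalIntegrable 0 θ)
      · exact ((continuous_pow n).div_const _).intervalIntegrable 0 θ
      · intro x hx
        have := ih x hx.1
        simpa [norm_mul] using this
    have hval : (∫ s in (0:ℝ)..θ, s ^ n / n.factorial)
        = θ ^ (n + 1) / (n + 1).factorial := by
      rw [intervalIntegral.integral_div, integral_pow]
      rw [Nat.factorial_succ]
      push_cast
      field_simp
      simp
    have hnn : (0:ℝ) ≤ ∫ s in (0:ℝ)..θ, ‖Complex.I * expRem n s‖ := by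
      apply intervalIntegral.integral_nonneg hθ
      intro x _; positivity
    rw [hval] at hmono
    calc ‖∫ s in (0:ℝ)..θ, Complex.I * expRem n s‖
        ≤ |∫ s in (0:ℝ)..θ, ‖Complex.I * expRem n s‖| := hstep
      _ = ∫ s in (0:ℝ)..θ, ‖Complex.I * expRem n s‖ := abs_of_nonneg hnn
      _ ≤ θ ^ (n + 1) / (n + 1).factorial := hmono

lemma norm_expRem_le_two_nonneg (n : ℕ) (θ : ℝ) (hθ : 0 ≤ θ) :
    ‖expRem (n + 1) θ‖ ≤ 2 * θ ^ n / n.factorial := by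
  induction n generalizing θ hθ with
  | zero =>
    have : expRem 1 θ = Complex.exp (θ * Complex.I) - 1 := by
      simp [expRem]
    rw [this]
    have h1 : ‖Complex.exp ((θ:ℂ) * Complex.I)‖ = 1 := by
      simp [Complex.norm_exp_ofReal_mul_I]
    calc ‖Complex.exp ((θ:ℂ) * Complex.I) - 1‖
        ≤ ‖Complex.exp ((θ:ℂ) * Complex.I)‖ + ‖(1:ℂ)‖ := norm_sub_le _ _
      _ ≤ 2 * θ ^ 0 / Nat.factorial 0 := by rw [h1]; norm_num
  | succ n ih =>
    rw [expRem_succ_eq_integral]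
    have hstep : ‖∫ s in (0:ℝ)..θ, Complex.I * expRem (n + 1) s‖
        ≤ |∫ s in (0:ℝ)..θ, ‖Complex.I * expRem (n + 1) s‖| :=
      intervalIntegral.norm_integral_le_abs_integral_norm
    have hmono : (∫ s in (0:ℝ)..θ, ‖Complex.I * expRem (n + 1) s‖)
        ≤ ∫ s in (0:ℝ)..θ, 2 * s ^ n / n.factorial := by
      apply intervalIntegral.integral_mono_on hθ
      · exact ((continuous_const.mul (expRem_continuous (n + 1))).norm.intervalIntegrable 0 θ)
      · exact ((continuous_const.mul (continuous_pow n)).div_const _).intervalIntegrable 0 θ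
      · intro x hx
        have := ih x hx.1
        simpa [norm_mul] using this
    have hval : (∫ s in (0:ℝ)..θ, 2 * s ^ n / n.factorial)
        = 2 * θ ^ (n + 1) / (n + 1).factorial := by
      simp_rw [mul_div_assoc]
      rw [intervalIntegral.integral_const_mul, intervalIntegral.integral_div, integral_pow]
      rw [Nat.factorial_succ]
      push_cast
      field_simp
      simp
    have hnn : (0:ℝ) ≤ ∫ s in (0:ℝ)..θ, ‖Complex.I * expRem (n + 1) s‖ := by
      apply intervalIntegral.integral_nonneg hθ
      intro x _; positivity
    rw [hval] at hmono
    calc ‖∫ s in (0:ℝ)..θ, Complex.I * expRem (n + 1) s‖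
        ≤ |∫ s in (0:ℝ)..θ, ‖Complex.I * expRem (n + 1) s‖| := hstep
      _ = ∫ s in (0:ℝ)..θ, ‖Complex.I * expRem (n + 1) s‖ := abs_of_nonneg hnn
      _ ≤ 2 * θ ^ (n + 1) / (n + 1).factorial := hmono

lemma expRem_neg (n : ℕ) (θ : ℝ) :
    expRem n (-θ) = (starRingEnd ℂ) (expRem n θ) := by
  unfold expRem
  rw [map_sub, ← Complex.exp_conj, map_sum]
  push_cast
  congr 1
  · congr 1; simp
  · apply Finset.sum_congr rfl
    intro k _
    rw [map_div₀, map_pow, map_mul]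
    simp

lemma norm_expRem_le (n : ℕ) (θ : ℝ) :
    ‖expRem n θ‖ ≤ |θ| ^ n / n.factorial := by
  rcases le_or_gt 0 θ with h | h
  · rw [_root_.abs_of_nonneg h]; exact norm_expRem_le_nonneg n θ h
  · have h2 : ‖expRem n (-θ)‖ = ‖expRem n θ‖ := by
      rw [expRem_neg]; exact RCLike.norm_conj _
    rw [← h2, _root_.abs_of_neg h]
    exact norm_expRem_le_nonneg n (-θ) (by linarith)

lemma norm_expRem_le_two (n : ℕ) (θ : ℝ) :
    ‖expRem (n + 1) θ‖ ≤ 2 * |θ| ^ n / n.factorial := by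
  rcases le_or_gt 0 θ with h | h
  · rw [_root_.abs_of_nonneg h]; exact norm_expRem_le_two_nonneg n θ h
  · have h2 : ‖expRem (n + 1) (-θ)‖ = ‖expRem (n + 1) θ‖ := by
      rw [expRem_neg]; exact RCLike.norm_conj _
    rw [← h2, _root_.abs_of_neg h]
    exact norm_expRem_le_two_nonneg n (-θ) (by linarith)

lemma six_pow_fact_le (i : ℕ) : 6 ^ (i + 1) * i.factorial ≤ (2 * i + 3).factorial := by
  induction i with
  | zero => simp [Nat.factorial]
  | succ i ih =>
    have h : 2 * (i + 1) + 3 = (2 * i + 3) + 2 := by ring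
    rw [h]
    have h2 : ((2 * i + 3) + 2).factorial = (2 * i + 5) * ((2 * i + 4) * (2 * i + 3).factorial) := by
      show (2 * i + 5).factorial = _
      rw [show 2*i+5 = (2*i+4)+1 from by ring, Nat.factorial_succ,
        show 2*i+4 = (2*i+3)+1 from by ring, Nat.factorial_succ]
    rw [h2]
    calc 6 ^ (i + 1 + 1) * (i + 1).factorial
        = (6 * (i + 1)) * (6 ^ (i + 1) * i.factorial) := by
          rw [Nat.factorial_succ]; ring
      _ ≤ (6 * (i + 1)) * (2 * i + 3).factorial := Nat.mul_le_mul_left _ ih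
      _ ≤ ((2 * i + 5) * (2 * i + 4)) * (2 * i + 3).factorial := by
          apply Nat.mul_le_mul_right
          nlinarith
      _ = (2 * i + 5) * ((2 * i + 4) * (2 * i + 3).factorial) := by ring

lemma term_le_exp (x : ℝ) (hx : 0 ≤ x) (i : ℕ) : x ^ i / i.factorial ≤ Real.exp x := by
  refine le_trans ?_ (Real.sum_le_exp_of_nonneg hx (i + 1))
  exact Finset.single_le_sum (f := fun j => x ^ j / (j.factorial : ℝ))
    (fun j _ => by positivity) (Finset.self_mem_range_succ i)

lemma odd_pow_fact_bound (i : ℕ) (s : ℝ) (hs : 0 ≤ s) :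
    s ^ (2 * i + 3) / (2 * i + 3).factorial ≤ s ^ 3 / 6 * Real.exp (s ^ 2 / 6) := by
  have h1 : s ^ (2 * i + 3) / (2 * i + 3).factorial
      ≤ s ^ (2 * i + 3) / (6 ^ (i + 1) * i.factorial) := by
    apply div_le_div_of_nonneg_left (by positivity) (by positivity)
    exact_mod_cast six_pow_fact_le i
  have h2 : s ^ (2 * i + 3) / ((6:ℝ) ^ (i + 1) * i.factorial)
      = s ^ 3 / 6 * ((s ^ 2 / 6) ^ i / i.factorial) := by
    rw [pow_add, pow_mul, div_pow]
    have : (i.factorial : ℝ) ≠ 0 := Nat.cast_ne_zero.2 i.factorial_ne_zero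
    field_simp
    ring
  rw [h2] at h1
  calc s ^ (2 * i + 3) / ((2 * i + 3).factorial : ℝ)
      ≤ s ^ 3 / 6 * ((s ^ 2 / 6) ^ i / i.factorial) := h1
    _ ≤ s ^ 3 / 6 * Real.exp (s ^ 2 / 6) := by
        apply mul_le_mul_of_nonneg_left (term_le_exp _ (by positivity) i) (by positivity)

lemma pow_fact_bound (k : ℕ) (hk : 3 ≤ k) (s : ℝ) (hs : 0 ≤ s) :
    s ^ k / k.factorial ≤ 3 / 16 * (s ^ 3 * Real.exp (s ^ 2 / 6)) := by
  have hE : (0:ℝ) < Real.exp (s ^ 2 / 6) := Real.exp_pos _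
  rcases Nat.even_or_odd k with he | ho
  · -- k even, k ≥ 4 : k = 2i+4
    obtain ⟨j, hj⟩ := he
    obtain ⟨i, hi⟩ : ∃ i, k = 2 * i + 4 := ⟨j - 2, by omega⟩
    subst hi
    have hA := odd_pow_fact_bound i s hs
    have hB := odd_pow_fact_bound (i + 1) s hs
    rw [show 2 * (i + 1) + 3 = 2 * i + 5 from by ring] at hB
    have hF3 : (0:ℝ) < ((2 * i + 3).factorial : ℝ) := by
      exact_mod_cast (2 * i + 3).factorial_pos
    have hfK : ((2 * i + 4).factorial : ℝ) = (2 * (i:ℝ) + 4) * (2 * i + 3).factorial := by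
      rw [show 2*i+4 = (2*i+3)+1 from by ring, Nat.factorial_succ]; push_cast; ring
    have hfK1 : ((2 * i + 5).factorial : ℝ) = (2 * (i:ℝ) + 5) * ((2 * i + 4).factorial : ℝ) := by
      rw [show 2*i+5 = (2*i+4)+1 from by ring, Nat.factorial_succ]; push_cast; ring
    have e1 : s ^ (2 * i + 4) = s ^ (2 * i + 3) * s := by
      rw [show 2*i+4 = (2*i+3)+1 from by ring, pow_succ]
    have e2 : s ^ (2 * i + 5) = s ^ (2 * i + 3) * s ^ 2 := by
      rw [show 2*i+5 = (2*i+3)+2 from by ring, pow_add]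
    have key : s ^ (2 * i + 4) / ((2 * i + 4).factorial : ℝ)
        ≤ 1 / 2 * (s ^ (2 * i + 3) / (2 * i + 3).factorial)
          + (2 * (i:ℝ) + 5) / (2 * (2 * (i:ℝ) + 4)) * (s ^ (2 * i + 5) / (2 * i + 5).factorial) := by
      rw [hfK1, hfK, e1, e2]
      have hc : (0:ℝ) < 2 * (i:ℝ) + 4 := by positivity
      have hsq : 0 ≤ s ^ (2 * i + 3) * ((2 * (i:ℝ) + 4) - s) ^ 2 := by positivity
      have hp : 0 ≤ s ^ (2 * i + 3) := by positivity
      have heq : 1 / 2 * (s ^ (2*i+3) / ((2*i+3).factorial:ℝ))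
          + (2*(i:ℝ)+5) / (2*(2*(i:ℝ)+4)) * (s ^ (2*i+3) * s ^ 2 / ((2*(i:ℝ)+5) * ((2*(i:ℝ)+4) * ((2*i+3).factorial:ℝ))))
          - s ^ (2*i+3) * s / ((2*(i:ℝ)+4) * ((2*i+3).factorial:ℝ))
          = s ^ (2*i+3) * ((2*(i:ℝ)+4) - s)^2 / (2*(2*(i:ℝ)+4)^2 * ((2*i+3).factorial:ℝ)) := by
        have h1 : (2*(i:ℝ)+4) ≠ 0 := by positivity
        have h2 : (2*(i:ℝ)+5) ≠ 0 := by positivity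
        have h3 : ((2*i+3).factorial:ℝ) ≠ 0 := ne_of_gt hF3
        field_simp
        ring
      rw [← sub_nonneg, heq]
      positivity
    have hco : (2 * (i:ℝ) + 5) / (2 * (2 * (i:ℝ) + 4)) ≤ 5 / 8 := by
      rw [div_le_div_iff₀ (by positivity) (by norm_num)]
      nlinarith [Nat.cast_nonneg (α := ℝ) i]
    have hterm2 : (0:ℝ) ≤ s ^ (2 * i + 5) / (2 * i + 5).factorial := by positivity
    calc s ^ (2 * i + 4) / ((2 * i + 4).factorial : ℝ)
        ≤ 1 / 2 * (s ^ (2 * i + 3) / (2 * i + 3).factorial)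
          + (2 * (i:ℝ) + 5) / (2 * (2 * (i:ℝ) + 4)) * (s ^ (2 * i + 5) / (2 * i + 5).factorial) := key
      _ ≤ 1 / 2 * (s ^ 3 / 6 * Real.exp (s ^ 2 / 6))
          + 5 / 8 * (s ^ 3 / 6 * Real.exp (s ^ 2 / 6)) := by
          exact add_le_add (mul_le_mul_of_nonneg_left hA (by norm_num))
            (mul_le_mul hco hB hterm2 (by norm_num))
      _ = 3 / 16 * (s ^ 3 * Real.exp (s ^ 2 / 6)) := by ring
  · obtain ⟨j, hj⟩ := ho
    obtain ⟨i, hi⟩ : ∃ i, k = 2 * i + 3 := ⟨j - 1, by omega⟩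
    subst hi
    calc s ^ (2*i+3) / ((2*i+3).factorial : ℝ) ≤ s ^ 3 / 6 * Real.exp (s ^ 2 / 6) :=
          odd_pow_fact_bound i s hs
      _ ≤ 3 / 16 * (s ^ 3 * Real.exp (s ^ 2 / 6)) := by nlinarith [pow_nonneg hs 3]

lemma gaussian_charfun (t : ℝ) :
    ∫ x : ℝ, Complex.exp ((t : ℂ) * (x : ℂ) * Complex.I) ∂(gaussianReal 0 1)
      = Complex.exp (-(t : ℂ) ^ 2 / 2) := by
  rw [gaussianReal_of_var_ne_zero 0 one_ne_zero]
  have hmeas : Measurable fun x : ℝ => (gaussianPDFReal 0 1 x).toNNReal :=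
    (measurable_gaussianPDFReal 0 1).real_toNNReal
  have hpdf : gaussianPDF 0 1 = fun x => (((gaussianPDFReal 0 1 x).toNNReal : ℝ≥0) : ℝ≥0∞) := by
    funext x; rfl
  rw [hpdf, integral_withDensity_eq_integral_smul hmeas]
  have hb : (-(1/2 : ℂ)).re < 0 := by norm_num
  have heq : ∀ x : ℝ, ((gaussianPDFReal 0 1 x).toNNReal : ℝ≥0) • Complex.exp ((t:ℂ) * x * Complex.I)
      = ((Real.sqrt (2 * π))⁻¹ : ℂ) *
        Complex.exp (-(1/2 : ℂ) * (x:ℂ) ^ 2 + ((t : ℂ) * Complex.I) * (x:ℂ) + 0) := by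
    intro x
    have hval : ((gaussianPDFReal 0 1 x).toNNReal : ℝ)
        = (Real.sqrt (2 * π))⁻¹ * Real.exp (-(x ^ 2) / 2) := by
      rw [Real.coe_toNNReal _ (gaussianPDFReal_nonneg 0 1 x)]
      unfold gaussianPDFReal
      norm_num
    have hsmul : ((gaussianPDFReal 0 1 x).toNNReal : ℝ≥0) • Complex.exp ((t:ℂ) * x * Complex.I)
        = (((gaussianPDFReal 0 1 x).toNNReal : ℝ) : ℂ) * Complex.exp ((t:ℂ) * x * Complex.I) := by
      rw [NNReal.smul_def, Complex.real_smul]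
    rw [hsmul, hval]
    push_cast
    rw [mul_assoc, ← Complex.exp_add]
    congr 1
    ring
  rw [MeasureTheory.integral_congr_ae (Filter.Eventually.of_forall heq)]
  rw [MeasureTheory.integral_const_mul]
  rw [integral_cexp_quadratic hb ((t : ℂ) * Complex.I) 0]
  have h2pi : (↑π / -(-(1/2:ℂ))) = ((2 * π : ℝ) : ℂ) := by
    push_cast; field_simp
  rw [h2pi]
  have hsqrt : ((2 * π : ℝ) : ℂ) ^ (1/2 : ℂ) = ((Real.sqrt (2 * π) : ℝ) : ℂ) := by
    rw [show (1/2 : ℂ) = ((1/2 : ℝ) : ℂ) from by norm_num,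
      ← Complex.ofReal_cpow (show (0:ℝ) ≤ 2 * π from by positivity)]
    norm_cast
    rw [Real.sqrt_eq_rpow]
  rw [hsqrt]
  have hexp : (0 - ((t:ℂ) * Complex.I)^2 / (4 * -(1/2:ℂ))) = -(t:ℂ)^2/2 := by
    rw [mul_pow, Complex.I_sq]
    ring
  rw [hexp]
  have hs : ((Real.sqrt (2*π) : ℝ) : ℂ) ≠ 0 := by
    norm_cast
    positivity
  rw [← mul_assoc, inv_mul_cancel₀ hs, one_mul]

lemma norm_cexp_real_mul_I (a : ℝ) : ‖Complex.exp ((a : ℂ) * Complex.I)‖ = 1 := by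
  rw [Complex.norm_exp]
  simp

lemma integrable_cexp_mul_I (ν : Measure ℝ) [IsFiniteMeasure ν] (θ : ℝ) :
    Integrable (fun x : ℝ => Complex.exp ((θ : ℂ) * x * Complex.I)) ν := by
  apply Integrable.mono' (integrable_const (1:ℝ))
  · apply Continuous.aestronglyMeasurable
    fun_prop
  · filter_upwards with x
    have : ((θ : ℂ) * x * Complex.I) = (((θ * x : ℝ) : ℂ) * Complex.I) := by push_cast; ring
    rw [this, norm_cexp_real_mul_I]

lemma exp_cubic_lb (x : ℝ) (hx : 0 ≤ x) : 1 + x + x^2/2 + x^3/6 ≤ Real.exp x := by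
  have h := Real.sum_le_exp_of_nonneg hx 4
  have : ∑ i ∈ Finset.range 4, x ^ i / i.factorial = 1 + x + x^2/2 + x^3/6 := by
    norm_num [Finset.sum_range_succ, Nat.factorial]
  linarith [this ▸ h]

lemma key_poly (s : ℝ) (hs : 0 ≤ s) :
    9 / (32 * Real.exp 1) * s ^ 3 ≤ s^2/6 + s^4/72 + s^6/1296 := by
  rw [div_mul_eq_mul_div, div_le_iff₀ (by positivity)]
  have he : (2.7182818283:ℝ) < Real.exp 1 := Real.exp_one_gt_d9
  have hrhs : (0:ℝ) ≤ (s^2/6 + s^4/72 + s^6/1296) * 32 := by positivity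
  have h1 : (s^2/6 + s^4/72 + s^6/1296) * 32 * 2.7182818283
      ≤ (s^2/6 + s^4/72 + s^6/1296) * 32 * Real.exp 1 := by
    exact mul_le_mul_of_nonneg_left he.le hrhs
  have h2 : 9 * s^3 ≤ (s^2/6 + s^4/72 + s^6/1296) * 32 * 2.7182818283 := by
    nlinarith [mul_nonneg (sq_nonneg s) (sq_nonneg (s - 2.1)),
      mul_nonneg (sq_nonneg s) (sq_nonneg (s^2 - 7)), hs, sq_nonneg s]
  calc 9 * s^3 ≤ (s^2/6 + s^4/72 + s^6/1296) * 32 * 2.7182818283 := h2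
    _ ≤ (s^2/6 + s^4/72 + s^6/1296) * 32 * Real.exp 1 := h1
    _ = (s^2/6 + s^4/72 + s^6/1296) * (32 * Real.exp 1) := by ring
end Helpers

/-- Integral of a function against a signed measure, via its Jordan decomposition. -/
noncomputable def signedIntegral (η : SignedMeasure ℝ) (g : ℝ → ℝ) : ℝ :=
  (∫ x, g x ∂η.toJordanDecomposition.posPart) - ∫ x, g x ∂η.toJordanDecomposition.negPart

theorem charfun_bound_small_t
    (μ : Measure ℝ) [IsProbabilityMeasure μ] (σ : ℝ) (hσ : 0 < σ)
    (m : ℕ) (hm : 3 ≤ m)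
    (η : SignedMeasure ℝ)
    (hη : η = (μ.map (· / σ)).toSignedMeasure - (gaussianReal 0 1).toSignedMeasure)
    (h_int : ∀ k ≤ m + 1, Integrable (fun x => |x| ^ k) η.totalVariation)
    (h_pseudo : ∀ k ≤ m, signedIntegral η (fun x => x ^ k) = 0)
    (n : ℕ) (hn : 1 ≤ n)
    (ν₁ ν₂ νn : ℝ)
    (hν₁ : ν₁ = ∫ x in {x : ℝ | |x| ≤ σ * Real.sqrt n}, |x| ^ (m + 1) ∂η.totalVariation)
    (hν₂ : ν₂ = ∫ x in {x : ℝ | σ * Real.sqrt n < |x|}, |x| ^ m ∂η.totalVariation)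
    (hνn : νn = max ν₁ ν₂)
    (hsmall : νn < (1 / 2) * Real.exp (-(3 / 2)))
    (T₁ : ℝ) (hT₁ : T₁ = Real.sqrt (-2 * Real.log (2 * Real.exp 1 * νn))) :
    ∀ t : ℝ, |t| ≤ T₁ →
      ‖∫ x, Complex.exp (((t / σ : ℝ) : ℂ) * x * Complex.I) ∂μ‖ ≤
        Real.exp (-t ^ 2 / 6) := by
  intro t ht
  have hσ' : σ ≠ 0 := ne_of_gt hσ
  set γ : Measure ℝ := gaussianReal 0 1 with hγ
  set μt : Measure ℝ := μ.map (· / σ) with hμt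
  have hmdiv : Measurable (fun x : ℝ => x / σ) := by fun_prop
  have hcexp_cont : Continuous (fun x : ℝ => Complex.exp ((t : ℂ) * x * Complex.I)) := by
    fun_prop
  haveI : IsProbabilityMeasure μt :=
    Measure.isProbabilityMeasure_map hmdiv.aemeasurable
  set P : Measure ℝ := η.toJordanDecomposition.posPart with hP
  set N : Measure ℝ := η.toJordanDecomposition.negPart with hN
  have hτ : η.totalVariation = P + N := rfl
  -- change of variables
  have hmap : (∫ x, Complex.exp ((t : ℂ) * x * Complex.I) ∂μt)
      = ∫ x, Complex.exp (((t / σ : ℝ) : ℂ) * x * Complex.I) ∂μ := by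
    rw [hμt, integral_map hmdiv.aemeasurable
      (hcexp_cont.aestronglyMeasurable.mono_measure le_rfl)]
    apply integral_congr_ae
    filter_upwards with x
    congr 1
    have hσc : (σ : ℂ) ≠ 0 := by exact_mod_cast hσ'
    push_cast
    field_simp
  -- measure identity : μt + N = γ + P
  have hJ : P.toSignedMeasure - N.toSignedMeasure = μt.toSignedMeasure - γ.toSignedMeasure := by
    have h1 : η.toJordanDecomposition.toSignedMeasure = η :=
      η.toSignedMeasure_toJordanDecomposition
    calc P.toSignedMeasure - N.toSignedMeasure
        = η.toJordanDecomposition.toSignedMeasure := rfl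
      _ = η := h1
      _ = μt.toSignedMeasure - γ.toSignedMeasure := by rw [hη]
  have hmeas_eq : μt + N = γ + P := by
    apply Measure.toSignedMeasure_eq_toSignedMeasure_iff.mp
    rw [Measure.toSignedMeasure_add, Measure.toSignedMeasure_add]
    have h2 := sub_eq_sub_iff_add_eq_add.mp hJ
    rw [add_comm (Measure.toSignedMeasure γ) (Measure.toSignedMeasure P)]
    exact h2.symm
  -- integral splitting
  have hsplit : ∀ g : ℝ → ℂ, Integrable g μt → Integrable g γ → Integrable g P →
      Integrable g N →
      ∫ x, g x ∂μt = (∫ x, g x ∂γ) + ((∫ x, g x ∂P) - ∫ x, g x ∂N) := by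
    intro g h1 h2 h3 h4
    have e1 : ∫ x, g x ∂(μt + N) = ∫ x, g x ∂(γ + P) := by rw [hmeas_eq]
    rw [integral_add_measure h1 h4, integral_add_measure h2 h3] at e1
    linear_combination e1
  -- integrability facts
  have hPle : P ≤ η.totalVariation := by rw [hτ]; exact Measure.le_add_right le_rfl
  have hNle : N ≤ η.totalVariation := by rw [hτ]; exact Measure.le_add_left le_rfl
  have hxkP : ∀ k, k ≤ m + 1 → Integrable (fun x : ℝ => (x : ℂ) ^ k) P := by
    intro k hk
    have h1 : Integrable (fun x : ℝ => x ^ k) P := by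
      apply Integrable.mono' ((h_int k hk).mono_measure hPle)
        ((continuous_pow k).aestronglyMeasurable)
      filter_upwards with x
      rw [Real.norm_eq_abs, abs_pow]
    simpa [Complex.ofReal_pow] using h1.ofReal (𝕜 := ℂ)
  have hxkN : ∀ k, k ≤ m + 1 → Integrable (fun x : ℝ => (x : ℂ) ^ k) N := by
    intro k hk
    have h1 : Integrable (fun x : ℝ => x ^ k) N := by
      apply Integrable.mono' ((h_int k hk).mono_measure hNle)
        ((continuous_pow k).aestronglyMeasurable)
      filter_upwards with x
      rw [Real.norm_eq_abs, abs_pow]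
    simpa [Complex.ofReal_pow] using h1.ofReal (𝕜 := ℂ)
  -- vanishing pseudo-moments (complex version)
  have hmom : ∀ k, k ≤ m → (∫ x, (x : ℂ) ^ k ∂P) - (∫ x, (x : ℂ) ^ k ∂N) = 0 := by
    intro k hk
    have h1 : (∫ x, (x : ℂ) ^ k ∂P) = ((∫ x, x ^ k ∂P : ℝ) : ℂ) := by
      have h := integral_ofReal (𝕜 := ℂ) (f := fun x : ℝ => x ^ k) (μ := P)
      have h2 : (RCLike.ofReal (∫ x, x ^ k ∂P) : ℂ) = ((∫ x, x ^ k ∂P : ℝ) : ℂ) := rfl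
      rw [← h2, ← h]
      apply integral_congr_ae
      filter_upwards with x
      norm_num
    have h2 : (∫ x, (x : ℂ) ^ k ∂N) = ((∫ x, x ^ k ∂N : ℝ) : ℂ) := by
      have h := integral_ofReal (𝕜 := ℂ) (f := fun x : ℝ => x ^ k) (μ := N)
      have h2 : (RCLike.ofReal (∫ x, x ^ k ∂N) : ℂ) = ((∫ x, x ^ k ∂N : ℝ) : ℂ) := rfl
      rw [← h2, ← h]
      apply integral_congr_ae
      filter_upwards with x
      norm_num
    have h3 := h_pseudo k hk
    unfold signedIntegral at h3
    rw [h1, h2, ← Complex.ofReal_sub]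
    rw [← hP, ← hN] at h3
    rw [h3, Complex.ofReal_zero]
  -- remainder integrability
  have hRemτ : Integrable (fun x : ℝ => expRem (m + 1) (t * x)) η.totalVariation := by
    apply Integrable.mono' ((h_int (m + 1) le_rfl).const_mul
      (|t| ^ (m + 1) / (m + 1).factorial))
    · exact ((expRem_continuous (m + 1)).comp
        (continuous_const.mul continuous_id)).aestronglyMeasurable
    · filter_upwards with x
      calc ‖expRem (m + 1) (t * x)‖ ≤ |t * x| ^ (m + 1) / (m + 1).factorial :=
            norm_expRem_le _ _
        _ = |t| ^ (m + 1) / (m + 1).factorial * |x| ^ (m + 1) := by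
            rw [abs_mul, mul_pow]; ring
  have hRemP : Integrable (fun x : ℝ => expRem (m + 1) (t * x)) P := hRemτ.mono_measure hPle
  have hRemN : Integrable (fun x : ℝ => expRem (m + 1) (t * x)) N := hRemτ.mono_measure hNle
  -- decomposition of the exponential
  have hdecomp : ∀ x : ℝ, Complex.exp ((t : ℂ) * x * Complex.I)
      = expRem (m + 1) (t * x) + ∑ k ∈ Finset.range (m + 1),
          ((t : ℂ) * Complex.I) ^ k / k.factorial * (x : ℂ) ^ k := by
    intro x
    unfold expRem
    have h1 : ((t * x : ℝ) : ℂ) * Complex.I = (t : ℂ) * x * Complex.I := by push_cast; ring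
    rw [h1]
    have h2 : ∀ k, ((t : ℂ) * x * Complex.I) ^ k / k.factorial
        = ((t : ℂ) * Complex.I) ^ k / k.factorial * (x : ℂ) ^ k := by
      intro k
      rw [show (t : ℂ) * x * Complex.I = ((t : ℂ) * Complex.I) * x from by ring, mul_pow]
      ring
    rw [Finset.sum_congr rfl (fun k _ => h2 k)]
    ring
  have hsumP : Integrable (fun x : ℝ => ∑ k ∈ Finset.range (m + 1),
      ((t : ℂ) * Complex.I) ^ k / k.factorial * (x : ℂ) ^ k) P :=
    integrable_finset_sum _ (fun k hk =>
      ((hxkP k (by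
        have := Finset.mem_range.mp hk; omega)).const_mul _))
  have hsumN : Integrable (fun x : ℝ => ∑ k ∈ Finset.range (m + 1),
      ((t : ℂ) * Complex.I) ^ k / k.factorial * (x : ℂ) ^ k) N :=
    integrable_finset_sum _ (fun k hk =>
      ((hxkN k (by
        have := Finset.mem_range.mp hk; omega)).const_mul _))
  -- key identity
  have hkey : (∫ x, Complex.exp ((t : ℂ) * x * Complex.I) ∂P)
      - (∫ x, Complex.exp ((t : ℂ) * x * Complex.I) ∂N)
      = (∫ x, expRem (m + 1) (t * x) ∂P) - (∫ x, expRem (m + 1) (t * x) ∂N) := by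
    have eP : ∫ x, Complex.exp ((t : ℂ) * x * Complex.I) ∂P
        = (∫ x, expRem (m + 1) (t * x) ∂P) + ∑ k ∈ Finset.range (m + 1),
            ((t : ℂ) * Complex.I) ^ k / k.factorial * ∫ x, (x : ℂ) ^ k ∂P := by
      rw [integral_congr_ae (Filter.Eventually.of_forall hdecomp),
        integral_add hRemP hsumP,
        integral_finset_sum _ (fun k hk => ((hxkP k (by
          have := Finset.mem_range.mp hk; omega)).const_mul _))]
      simp_rw [integral_const_mul]
    have eN : ∫ x, Complex.exp ((t : ℂ) * x * Complex.I) ∂N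
        = (∫ x, expRem (m + 1) (t * x) ∂N) + ∑ k ∈ Finset.range (m + 1),
            ((t : ℂ) * Complex.I) ^ k / k.factorial * ∫ x, (x : ℂ) ^ k ∂N := by
      rw [integral_congr_ae (Filter.Eventually.of_forall hdecomp),
        integral_add hRemN hsumN,
        integral_finset_sum _ (fun k hk => ((hxkN k (by
          have := Finset.mem_range.mp hk; omega)).const_mul _))]
      simp_rw [integral_const_mul]
    rw [eP, eN]
    have hzero : ∑ k ∈ Finset.range (m + 1),
          ((t : ℂ) * Complex.I) ^ k / k.factorial * (∫ x, (x : ℂ) ^ k ∂P)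
        - ∑ k ∈ Finset.range (m + 1),
          ((t : ℂ) * Complex.I) ^ k / k.factorial * (∫ x, (x : ℂ) ^ k ∂N) = 0 := by
      rw [← Finset.sum_sub_distrib]
      apply Finset.sum_eq_zero
      intro k hk
      have hkm : k ≤ m := by have := Finset.mem_range.mp hk; omega
      rw [← mul_sub, hmom k hkm, mul_zero]
    linear_combination hzero
  -- norm bound on the remainder difference
  set s : ℝ := |t| with hs
  have hs0 : 0 ≤ s := abs_nonneg t
  set G : ℝ := s ^ (m + 1) / (m + 1).factorial + 2 * s ^ m / m.factorial with hG
  have hnormRem : ‖(∫ x, expRem (m + 1) (t * x) ∂P) - ∫ x, expRem (m + 1) (t * x) ∂N‖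
      ≤ νn * G := by
    have h1 : ‖(∫ x, expRem (m + 1) (t * x) ∂P) - ∫ x, expRem (m + 1) (t * x) ∂N‖
        ≤ (∫ x, ‖expRem (m + 1) (t * x)‖ ∂P) + ∫ x, ‖expRem (m + 1) (t * x)‖ ∂N :=
      le_trans (norm_sub_le _ _)
        (add_le_add (norm_integral_le_integral_norm _) (norm_integral_le_integral_norm _))
    have h2 : (∫ x, ‖expRem (m + 1) (t * x)‖ ∂P) + ∫ x, ‖expRem (m + 1) (t * x)‖ ∂N
        = ∫ x, ‖expRem (m + 1) (t * x)‖ ∂η.totalVariation := by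
      rw [hτ, integral_add_measure hRemP.norm hRemN.norm]
    set A : Set ℝ := {x | |x| ≤ σ * Real.sqrt n} with hA
    have hAmeas : MeasurableSet A :=
      (isClosed_le continuous_abs continuous_const).measurableSet
    have hcompl : Aᶜ = {x : ℝ | σ * Real.sqrt n < |x|} := by
      ext x; simp [hA, not_le]
    have hsplitA : ∫ x, ‖expRem (m + 1) (t * x)‖ ∂η.totalVariation
        = (∫ x in A, ‖expRem (m + 1) (t * x)‖ ∂η.totalVariation)
          + ∫ x in Aᶜ, ‖expRem (m + 1) (t * x)‖ ∂η.totalVariation :=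
      (integral_add_compl hAmeas hRemτ.norm).symm
    have hbound1 : (∫ x in A, ‖expRem (m + 1) (t * x)‖ ∂η.totalVariation)
        ≤ s ^ (m + 1) / (m + 1).factorial * ν₁ := by
      rw [hν₁]
      rw [← integral_const_mul]
      apply setIntegral_mono_on hRemτ.norm.integrableOn
        (((h_int (m + 1) le_rfl).const_mul _).integrableOn) hAmeas
      intro x _
      calc ‖expRem (m + 1) (t * x)‖ ≤ |t * x| ^ (m + 1) / (m + 1).factorial :=
            norm_expRem_le _ _
        _ = s ^ (m + 1) / (m + 1).factorial * |x| ^ (m + 1) := by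
            rw [abs_mul, mul_pow, hs]; ring
    have hbound2 : (∫ x in Aᶜ, ‖expRem (m + 1) (t * x)‖ ∂η.totalVariation)
        ≤ 2 * s ^ m / m.factorial * ν₂ := by
      rw [hν₂, ← hcompl]
      rw [← integral_const_mul]
      apply setIntegral_mono_on hRemτ.norm.integrableOn
        (((h_int m (by omega)).const_mul _).integrableOn) hAmeas.compl
      intro x _
      calc ‖expRem (m + 1) (t * x)‖ ≤ 2 * |t * x| ^ m / m.factorial :=
            norm_expRem_le_two _ _
        _ = 2 * s ^ m / m.factorial * |x| ^ m := by
            rw [abs_mul, mul_pow, hs]; ring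
    have hν₁n : ν₁ ≤ νn := hνn ▸ le_max_left _ _
    have hν₂n : ν₂ ≤ νn := hνn ▸ le_max_right _ _
    have hc1 : (0:ℝ) ≤ s ^ (m + 1) / (m + 1).factorial := by positivity
    have hc2 : (0:ℝ) ≤ 2 * s ^ m / m.factorial := by positivity
    calc ‖(∫ x, expRem (m + 1) (t * x) ∂P) - ∫ x, expRem (m + 1) (t * x) ∂N‖
        ≤ (∫ x, ‖expRem (m + 1) (t * x)‖ ∂P) + ∫ x, ‖expRem (m + 1) (t * x)‖ ∂N := h1
      _ = ∫ x, ‖expRem (m + 1) (t * x)‖ ∂η.totalVariation := h2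
      _ = (∫ x in A, ‖expRem (m + 1) (t * x)‖ ∂η.totalVariation)
          + ∫ x in Aᶜ, ‖expRem (m + 1) (t * x)‖ ∂η.totalVariation := hsplitA
      _ ≤ s ^ (m + 1) / (m + 1).factorial * ν₁ + 2 * s ^ m / m.factorial * ν₂ :=
          add_le_add hbound1 hbound2
      _ ≤ s ^ (m + 1) / (m + 1).factorial * νn + 2 * s ^ m / m.factorial * νn :=
          add_le_add (mul_le_mul_of_nonneg_left hν₁n hc1)
            (mul_le_mul_of_nonneg_left hν₂n hc2)
      _ = νn * G := by rw [hG]; ring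
  -- main bound via the splitting
  have hcharbound : ‖∫ x, Complex.exp (((t / σ : ℝ) : ℂ) * x * Complex.I) ∂μ‖
      ≤ Real.exp (-t ^ 2 / 2) + νn * G := by
    rw [← hmap]
    rw [hsplit _ (integrable_cexp_mul_I μt t) (integrable_cexp_mul_I γ t)
      (integrable_cexp_mul_I P t) (integrable_cexp_mul_I N t)]
    rw [show (∫ x, Complex.exp ((t : ℂ) * x * Complex.I) ∂γ)
        = Complex.exp (-(t : ℂ) ^ 2 / 2) from gaussian_charfun t]
    have habs1 : ‖Complex.exp (-(t : ℂ) ^ 2 / 2)‖ = Real.exp (-t ^ 2 / 2) := by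
      rw [show (-(t : ℂ) ^ 2 / 2) = ((-t ^ 2 / 2 : ℝ) : ℂ) from by push_cast; ring]
      exact Complex.norm_exp_ofReal _
    calc ‖Complex.exp (-(t : ℂ) ^ 2 / 2)
          + ((∫ x, Complex.exp ((t : ℂ) * x * Complex.I) ∂P)
            - ∫ x, Complex.exp ((t : ℂ) * x * Complex.I) ∂N)‖
        ≤ ‖Complex.exp (-(t : ℂ) ^ 2 / 2)‖
          + ‖(∫ x, Complex.exp ((t : ℂ) * x * Complex.I) ∂P)
            - ∫ x, Complex.exp ((t : ℂ) * x * Complex.I) ∂N‖ := by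
          exact norm_add_le _ _
      _ ≤ Real.exp (-t ^ 2 / 2) + νn * G := by
          rw [habs1]
          refine add_le_add le_rfl ?_
          rw [hkey]
          exact hnormRem
  -- analytic estimates
  have hGb : G ≤ 9 / 16 * (s ^ 3 * Real.exp (s ^ 2 / 6)) := by
    have h1 := pow_fact_bound (m + 1) (by omega) s hs0
    have h2 := pow_fact_bound m hm s hs0
    rw [hG, mul_div_assoc]
    linarith
  have hG0 : (0:ℝ) ≤ G := by rw [hG]; positivity
  have hν₁0 : (0:ℝ) ≤ ν₁ := by
    rw [hν₁]; exact integral_nonneg (fun x => by positivity)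
  have hνn0 : (0:ℝ) ≤ νn := le_trans hν₁0 (hνn ▸ le_max_left _ _)
  have hts : t ^ 2 = s ^ 2 := (sq_abs t).symm
  rcases eq_or_lt_of_le hνn0 with hz | hpos
  · have hzz : νn * G = 0 := by rw [← hz, zero_mul]
    rw [hzz] at hcharbound
    calc ‖∫ x, Complex.exp (((t / σ : ℝ) : ℂ) * x * Complex.I) ∂μ‖
        ≤ Real.exp (-t ^ 2 / 2) + 0 := hcharbound
      _ ≤ Real.exp (-t ^ 2 / 6) := by
          rw [add_zero]
          apply Real.exp_le_exp.mpr
          have := sq_nonneg t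
          linarith
  · have h2e : (0:ℝ) < 2 * Real.exp 1 * νn := by positivity
    have hup2 : Real.exp 1 * Real.exp (-(3/2 : ℝ)) = Real.exp (-(1/2 : ℝ)) := by
      rw [← Real.exp_add]; norm_num
    have hup : 2 * Real.exp 1 * νn < Real.exp (-(1/2 : ℝ)) := by
      calc 2 * Real.exp 1 * νn < 2 * Real.exp 1 * (1 / 2 * Real.exp (-(3/2 : ℝ))) :=
            mul_lt_mul_of_pos_left hsmall (by positivity)
        _ = Real.exp 1 * Real.exp (-(3/2 : ℝ)) := by ring
        _ = Real.exp (-(1/2 : ℝ)) := hup2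
    have hlog : Real.log (2 * Real.exp 1 * νn) < -(1/2 : ℝ) := by
      calc Real.log (2 * Real.exp 1 * νn) < Real.log (Real.exp (-(1/2 : ℝ))) :=
            Real.log_lt_log h2e hup
        _ = -(1/2 : ℝ) := Real.log_exp _
    have hpos2 : (0:ℝ) ≤ -2 * Real.log (2 * Real.exp 1 * νn) := by linarith
    have hT2 : T₁ ^ 2 = -2 * Real.log (2 * Real.exp 1 * νn) := by
      rw [hT₁, Real.sq_sqrt hpos2]
    have hνval : Real.exp (-T₁ ^ 2 / 2) = 2 * Real.exp 1 * νn := by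
      rw [hT2, show (-(-2 * Real.log (2 * Real.exp 1 * νn)) / 2)
        = Real.log (2 * Real.exp 1 * νn) from by ring, Real.exp_log h2e]
    have hνle : νn ≤ Real.exp (-s ^ 2 / 2) / (2 * Real.exp 1) := by
      have hsT : s ≤ T₁ := ht
      have hsq : s ^ 2 ≤ T₁ ^ 2 := by
        have := pow_le_pow_left₀ hs0 hsT 2
        simpa using this
      have hmonoT : Real.exp (-T₁ ^ 2 / 2) ≤ Real.exp (-s ^ 2 / 2) :=
        Real.exp_le_exp.mpr (by linarith)
      have hνeq : νn = Real.exp (-T₁ ^ 2 / 2) / (2 * Real.exp 1) := by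
        rw [hνval]
        field_simp
      rw [hνeq]
      exact div_le_div_of_nonneg_right hmonoT (by positivity)
    set E1 : ℝ := Real.exp (-s ^ 2 / 2) with hE1
    set E2 : ℝ := Real.exp (-s ^ 2 / 3) with hE2
    set E3 : ℝ := Real.exp (-s ^ 2 / 6) with hE3
    set E4 : ℝ := Real.exp (s ^ 2 / 6) with hE4
    have hE42 : E4 * E2 = E3 := by
      rw [hE4, hE2, hE3, ← Real.exp_add]; ring_nf
    have hE14 : E1 * E4 = E2 := by
      rw [hE4, hE1, hE2, ← Real.exp_add]; ring_nf
    have hsq0 : (0:ℝ) ≤ s ^ 2 := sq_nonneg s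
    have hE12 : E1 ≤ E2 := Real.exp_le_exp.mpr (by linarith)
    have hE23 : E2 ≤ E3 := Real.exp_le_exp.mpr (by linarith)
    have hE2pos : (0:ℝ) < E2 := Real.exp_pos _
    have hkp : 9 / (32 * Real.exp 1) * s ^ 3 ≤ E4 - 1 := by
      have h1 := key_poly s hs0
      have h2 := exp_cubic_lb (s ^ 2 / 6) (by positivity)
      have e1 : (s ^ 2 / 6) ^ 2 / 2 = s ^ 4 / 72 := by ring
      have e2 : (s ^ 2 / 6) ^ 3 / 6 = s ^ 6 / 1296 := by ring
      rw [hE4]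
      linarith [h1, h2, e1, e2]
    have hchain : νn * G ≤ E3 - E2 := by
      have c1 : νn * G ≤ (E1 / (2 * Real.exp 1)) * (9 / 16 * (s ^ 3 * E4)) := by
        apply mul_le_mul hνle hGb hG0
        positivity
      have c2 : (E1 / (2 * Real.exp 1)) * (9 / 16 * (s ^ 3 * E4))
          = 9 / (32 * Real.exp 1) * s ^ 3 * (E1 * E4) := by
        ring
      calc νn * G ≤ (E1 / (2 * Real.exp 1)) * (9 / 16 * (s ^ 3 * E4)) := c1
        _ = 9 / (32 * Real.exp 1) * s ^ 3 * (E1 * E4) := c2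
        _ = 9 / (32 * Real.exp 1) * s ^ 3 * E2 := by rw [hE14]
        _ ≤ (E4 - 1) * E2 := mul_le_mul_of_nonneg_right hkp hE2pos.le
        _ = E3 - E2 := by rw [sub_mul, one_mul, hE42]
    calc ‖∫ x, Complex.exp (((t / σ : ℝ) : ℂ) * x * Complex.I) ∂μ‖
        ≤ Real.exp (-t ^ 2 / 2) + νn * G := hcharbound
      _ = E1 + νn * G := by rw [hE1, hts]
      _ ≤ E1 + (E3 - E2) := by linarith
      _ ≤ E3 := by linarith
      _ = Real.exp (-t ^ 2 / 6) := by rw [hE3, hts]
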